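/- Let z₊ > 0 > z₋ be real numbers with z₊ z₋ = −1 and z₊ ≠ 1. Then (2 z₊² − 1)/(z₊²)^{2/3} ≠ (2 z₋² − 1)/(z₋²)^{2/3}, where (·)^{2/3} denotes (real cube root of the square, i.e. (u)^{2/3} = (u²)^{1/3} applied to u = z±²). Equivalently, for positive reals u, v with u v = 1 and u ≠ 1, one has (2u² − 1)/u^{4/3} ≠ (2v² − 1)/v^{4/3}. -/

import Mathlib

/-- The real cube root. -/
noncomputable def cbrt (x : ℝ) : ℝ :=
  if 0 ≤ x then x ^ ((1 : ℝ) / 3) else -((-x) ^ ((1 : ℝ) / 3))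

/-!
Put `a = ∛(z₊²) > 0`. Since `z₋² = 1 / z₊²`, the `z₋` value is the same expression
`(2a³ − 1) / a²` evaluated at `a⁻¹`. Clearing denominators, equality of the two values
is `(a − 1)(a + 1)³ = 0`, which forces `a = 1`, i.e. `z₊ = 1`.
-/

lemma cbrt_neg (x : ℝ) : cbrt (-x) = -cbrt x := by
  unfold cbrt
  rcases lt_trichotomy x 0 with hx | rfl | hx
  · simp [hx.le, not_le.2 hx]
  · simp
  · simp [hx.le, not_le.2 hx]

lemma cbrt_pow_three_of_nonneg {b : ℝ} (hb : 0 ≤ b) : cbrt (b ^ 3) = b := by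
  rw [cbrt, if_pos (by positivity), one_div]
  exact_mod_cast Real.pow_rpow_inv_natCast hb three_ne_zero

lemma cbrt_pow_three (b : ℝ) : cbrt (b ^ 3) = b := by
  rcases le_total 0 b with hb | hb
  · exact cbrt_pow_three_of_nonneg hb
  · rw [← neg_neg b, Odd.neg_pow (by decide), cbrt_neg, cbrt_pow_three_of_nonneg (neg_nonneg.2 hb)]

lemma pow_three_cbrt_of_nonneg {x : ℝ} (hx : 0 ≤ x) : cbrt x ^ 3 = x := by
  rw [cbrt, if_pos hx, one_div]
  exact_mod_cast Real.rpow_inv_natCast_pow hx three_ne_zero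

lemma pow_three_cbrt (x : ℝ) : cbrt x ^ 3 = x := by
  rcases le_total 0 x with hx | hx
  · exact pow_three_cbrt_of_nonneg hx
  · rw [← neg_neg x, cbrt_neg, Odd.neg_pow (by decide), pow_three_cbrt_of_nonneg (neg_nonneg.2 hx)]

lemma cbrt_pow (x : ℝ) (n : ℕ) : cbrt (x ^ n) = cbrt x ^ n := by
  rw [← cbrt_pow_three (cbrt x ^ n), ← pow_mul, mul_comm, pow_mul, pow_three_cbrt]

lemma cbrt_inv (x : ℝ) : cbrt x⁻¹ = (cbrt x)⁻¹ := by
  rw [← cbrt_pow_three (cbrt x)⁻¹, inv_pow, pow_three_cbrt]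

lemma cbrt_pos {x : ℝ} (hx : 0 < x) : 0 < cbrt x := by
  rw [← Odd.pow_pos_iff (n := 3) (by decide), pow_three_cbrt]
  exact hx

lemma eq_one_of_div_sq_eq_inv {a : ℝ} (ha : 0 < a)
    (h : (2 * a ^ 3 - 1) / a ^ 2 = (2 * a⁻¹ ^ 3 - 1) / a⁻¹ ^ 2) : a = 1 := by
  have hfactor : (a - 1) * (a + 1) ^ 3 = 0 := by
    field_simp at h
    linear_combination h
  rcases mul_eq_zero.1 hfactor with hsub | hadd
  · linarith
  · linarith [pow_eq_zero_iff three_ne_zero |>.1 hadd]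

theorem F2_values_distinct_z_general (zp zm : ℝ)
    (hzp : 0 < zp) (hmul : zp * zm = -1) (hzp1 : zp ≠ 1) :
    (2 * zp ^ 2 - 1) / cbrt ((zp ^ 2) ^ 2) ≠ (2 * zm ^ 2 - 1) / cbrt ((zm ^ 2) ^ 2) := by
  set a := cbrt (zp ^ 2) with ha
  have ha3 : zp ^ 2 = a ^ 3 := (pow_three_cbrt _).symm
  have hzm : zm ^ 2 = (zp ^ 2)⁻¹ :=
    eq_inv_of_mul_eq_one_right (by rw [← mul_pow, hmul]; norm_num)
  have hb : cbrt (zm ^ 2) = a⁻¹ := by rw [hzm, cbrt_inv]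
  rw [cbrt_pow (zp ^ 2), cbrt_pow (zm ^ 2), hb, ← ha, hzm, ha3, ← inv_pow]
  intro h
  have ha1 : a = 1 := eq_one_of_div_sq_eq_inv (cbrt_pos (by positivity)) h
  rw [ha1, one_pow] at ha3
  exact hzp1 (by nlinarith)

/-- If `z₊ > 0 > z₋`, `z₊ z₋ = −1` and `z₊ ≠ 1`, then
`(2 z₊² − 1)/(z₊²)^{2/3} ≠ (2 z₋² − 1)/(z₋²)^{2/3}`, where
`(z²)^{2/3} = ((z²)²)^{1/3}` with the real cube root. -/
theorem F2_values_distinct_z (zp zm : ℝ)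
    (hzp : 0 < zp) (hzm : zm < 0) (hmul : zp * zm = -1) (hzp1 : zp ≠ 1) :
    (2 * zp ^ 2 - 1) / cbrt ((zp ^ 2) ^ 2) ≠ (2 * zm ^ 2 - 1) / cbrt ((zm ^ 2) ^ 2) :=
  F2_values_distinct_z_general zp zm hzp hmul hzp1
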